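/- arXiv:1105.1121 — 2 statements merged into one kernel-verified Lean document; each statement's English description precedes it below -/
import Mathlib

section
/- Let f_I ∈ L¹(ℝ) ∩ L^∞(ℝ) satisfy (A1) with price p0 ∈ ℝ and transaction cost a > 0, let F_I(x) := Σ_{n=0}^∞ f_I^+(x+na) for x < p0 and F_I(x) := −Σ_{n=0}^∞ f_I^-(x−na) for x > p0, and let F(x,t) := ∫_ℝ G(t,z) F_I(x−z) dz. Then for every fixed t > 0 there exists R > 0 such that F(x,t) < 0 for all x > R and F(x,t) > 0 for all x < −R. -/
open MeasureTheory

/-- The one-dimensional heat kernel `G(t,x) = (4πt)^{-1/2} exp(−x²/(4t))`. -/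
noncomputable def heatKernel (t x : ℝ) : ℝ :=
  (Real.sqrt (4 * Real.pi * t))⁻¹ * Real.exp (-(x ^ 2) / (4 * t))

/-!
Write the transformed datum as `Φ = P − N` with `P x = ∑ₙ f⁺(x + n a)` and
`N x = ∑ₙ f⁻(x − n a)`. By (A1) both series are finite sums: `P` vanishes on `[p0, ∞)`,
`N` on `(−∞, p0]`, and both grow at most linearly. In `∫ G(t, x − y) Φ(y) dy` the part
`y < p0` is a Gaussian tail that tends to `0` as `x → ∞`. On `[p0, ∞)` the integrand is
`≤ 0`, and the window `(p0 + n a, p0 + (n + 1) a]` containing `x` contributes at most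
`−G(t, a) ∫_{p0}^{p0+a} f⁻ < 0`, because `N(y) ≥ f⁻(y − n a)` there. Hence `F(x, t) < 0` for
large `x`. The behaviour at `−∞` follows by applying this to the reflected datum
`x ↦ −f(−x)`, whose price is `−p0`.
-/
open Set Filter

section HeatKernel

variable {t : ℝ}

theorem heatKernel_pos (ht : 0 < t) (x : ℝ) : 0 < heatKernel t x := by
  have := Real.sqrt_pos.2 (by positivity : 0 < 4 * Real.pi * t)
  unfold heatKernel
  positivity

theorem heatKernel_neg (t x : ℝ) : heatKernel t (-x) = heatKernel t x := by
  simp [heatKernel]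

theorem heatKernel_le_heatKernel_of_abs_le (ht : 0 ≤ t) {x y : ℝ} (h : |x| ≤ |y|) :
    heatKernel t y ≤ heatKernel t x := by
  unfold heatKernel
  gcongr _ * Real.exp (-?_ / _)
  exact sq_le_sq.2 h

theorem integrable_heatKernel (ht : 0 < t) : Integrable (heatKernel t) := by
  refine ((integrable_exp_neg_mul_sq (by positivity : 0 < 1 / (4 * t))).const_mul
    (Real.sqrt (4 * Real.pi * t))⁻¹).congr (ae_of_all _ fun x => ?_)
  simp only [heatKernel]
  ring_nf

theorem integrable_abs_mul_heatKernel (ht : 0 < t) :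
    Integrable fun x => |x| * heatKernel t x := by
  refine ((integrable_mul_exp_neg_mul_sq (by positivity : 0 < 1 / (4 * t))).abs.const_mul
    (Real.sqrt (4 * Real.pi * t))⁻¹).congr (ae_of_all _ fun x => ?_)
  simp only [heatKernel, abs_mul, abs_of_pos (Real.exp_pos _)]
  ring_nf

end HeatKernel

section Kernel

variable {K φ : ℝ → ℝ} {p0 a C : ℝ}

theorem integrable_mul_sub_of_abs_le (ha : 0 ≤ a) (hK_nonneg : ∀ z, 0 ≤ K z)
    (hK_int : Integrable K) (hK_mom : Integrable fun z => |z| * K z)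
    (hφ : AEStronglyMeasurable φ) (hφ_growth : ∀ y, |φ y| ≤ C * (1 + |y - p0| / a)) (x : ℝ) :
    Integrable fun y => K (x - y) * φ y := by
  have hC : 0 ≤ C := by simpa using (abs_nonneg _).trans (hφ_growth p0)
  refine Integrable.mono' (((hK_int.comp_sub_left x).const_mul (C * (1 + |x - p0| / a))).add
    ((hK_mom.comp_sub_left x).const_mul (C / a)))
    ((hK_int.comp_sub_left x).aestronglyMeasurable.mul hφ) (ae_of_all _ fun y => ?_)
  have htri : |y - p0| ≤ |x - p0| + |x - y| := by
    simpa only [add_comm |x - p0|, abs_sub_comm x y] using abs_sub_le y x p0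
  rw [norm_mul, Real.norm_of_nonneg (hK_nonneg _), Real.norm_eq_abs, Pi.add_apply]
  calc K (x - y) * |φ y| ≤ K (x - y) * (C * (1 + (|x - p0| + |x - y|) / a)) := by
        gcongr
        · exact hK_nonneg _
        · exact (hφ_growth y).trans (by gcongr)
    _ = _ := by ring

theorem integral_indicator_Iio_comp_sub (g : ℝ → ℝ) (p x : ℝ) :
    ∫ y, (Iio p).indicator (fun y => g (x - y)) y = ∫ z in Ioi (x - p), g z := by
  rw [← integral_indicator measurableSet_Ioi, ← integral_sub_left_eq_self _ volume x]
  congr 1 with y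
  simp only [indicator, mem_Iio, mem_Ioi, sub_sub_cancel, sub_lt_comm]

theorem mul_sub_le_window_add_tail {c : ℝ} (ha : 0 ≤ a) (hK_nonneg : ∀ z, 0 ≤ K z)
    (hK_lower : ∀ z ∈ Icc (-a) a, c ≤ K z) (hφ_growth : ∀ y, |φ y| ≤ C * (1 + |y - p0| / a))
    (hφ_nonpos : ∀ y, p0 ≤ y → φ y ≤ 0) {W : Set ℝ} {x : ℝ} (hx : p0 ≤ x)
    (hW : ∀ y ∈ W, p0 ≤ y ∧ |x - y| ≤ a) (y : ℝ) :
    K (x - y) * φ y ≤ c * W.indicator φ y +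
      (Iio p0).indicator (fun y => K (x - y) * (C * (1 + |x - y| / a))) y := by
  rcases le_or_gt p0 y with hy | hy
  · rw [indicator_of_notMem (show y ∉ Iio p0 from not_lt.2 hy), add_zero]
    by_cases hyW : y ∈ W
    · rw [indicator_of_mem hyW]
      exact mul_le_mul_of_nonpos_right (hK_lower _ (abs_le.1 (hW y hyW).2)) (hφ_nonpos y hy)
    · rw [indicator_of_notMem hyW, mul_zero]
      exact mul_nonpos_of_nonneg_of_nonpos (hK_nonneg _) (hφ_nonpos y hy)
  · rw [indicator_of_notMem fun hyW => (hW y hyW).1.not_gt hy,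
      indicator_of_mem (show y ∈ Iio p0 from hy), mul_zero, zero_add]
    refine (le_abs_self _).trans ?_
    rw [abs_mul, abs_of_nonneg (hK_nonneg _)]
    refine mul_le_mul_of_nonneg_left ((hφ_growth y).trans ?_) (hK_nonneg _)
    have hC : 0 ≤ C := by simpa using (abs_nonneg _).trans (hφ_growth p0)
    have : |y - p0| ≤ |x - y| := by
      rw [abs_of_neg (by linarith), abs_of_pos (by linarith)]
      linarith
    gcongr

theorem eventually_integral_mul_sub_neg {c m : ℝ} (ha : 0 < a) (hc : 0 < c) (hm : 0 < m)
    (hK_nonneg : ∀ z, 0 ≤ K z) (hK_int : Integrable K) (hK_mom : Integrable fun z => |z| * K z)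
    (hK_lower : ∀ z ∈ Icc (-a) a, c ≤ K z)
    (hφ : AEStronglyMeasurable φ) (hφ_growth : ∀ y, |φ y| ≤ C * (1 + |y - p0| / a))
    (hφ_nonpos : ∀ y, p0 ≤ y → φ y ≤ 0)
    (hφ_window : ∀ n : ℕ, ∫ y in p0 + n * a..p0 + n * a + a, φ y ≤ -m) :
    ∀ᶠ x in atTop, ∫ z, K z * φ (x - z) < 0 := by
  set g : ℝ → ℝ := fun z => K z * (C * (1 + |z| / a))
  have hg : Integrable g := by
    refine ((hK_int.const_mul C).add (hK_mom.const_mul (C / a))).congr (ae_of_all _ fun z => ?_)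
    simp only [g, Pi.add_apply]
    ring
  have htail : Tendsto (fun x => ∫ z in Ioi (x - p0), g z) atTop (nhds 0) :=
    tendsto_integral_Ioi_zero (tendsto_atTop_add_const_right _ (-p0) tendsto_id)
  filter_upwards [htail.eventually (gt_mem_nhds (mul_pos hc hm)), eventually_ge_atTop p0]
    with x hx_tail hx
  obtain ⟨n, hn_le, hn_gt⟩ : ∃ n : ℕ, n * a ≤ x - p0 ∧ x - p0 < n * a + a :=
    ⟨⌊(x - p0) / a⌋₊, (le_div_iff₀ ha).1 (Nat.floor_le (div_nonneg (by linarith) ha.le)),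
      by linarith [(div_lt_iff₀ ha).1 (Nat.lt_floor_add_one ((x - p0) / a))]⟩
  set W := Ioc (p0 + n * a) (p0 + n * a + a)
  have hW : ∀ y ∈ W, p0 ≤ y ∧ |x - y| ≤ a := fun y hy => by
    have : (0 : ℝ) ≤ n * a := by positivity
    exact ⟨by linarith [hy.1], abs_le.2 ⟨by linarith [hy.2], by linarith [hy.1]⟩⟩
  have hwin : ∫ y in W, φ y ≤ -m := by
    have h := hφ_window n
    rwa [intervalIntegral.integral_of_le (by linarith)] at h
  -- a function that is not integrable on `W` would have integral `0 > -m` there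
  have hW_int : IntegrableOn φ W := Integrable.of_integral_ne_zero (by linarith)
  have hwin_int := (hW_int.integrable_indicator measurableSet_Ioc).const_mul c
  have htail_int := (hg.comp_sub_left x).indicator (measurableSet_Iio (a := p0))
  calc ∫ z, K z * φ (x - z) = ∫ y, K (x - y) * φ y := by
        rw [← integral_sub_left_eq_self _ volume x]
        simp only [sub_sub_cancel]
    _ ≤ ∫ y, (c * W.indicator φ y + (Iio p0).indicator (fun y => g (x - y)) y) :=
        integral_mono (integrable_mul_sub_of_abs_le ha.le hK_nonneg hK_int hK_mom hφ hφ_growth x)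
          (hwin_int.add htail_int)
          (mul_sub_le_window_add_tail ha.le hK_nonneg hK_lower hφ_growth hφ_nonpos hx hW)
    _ = c * (∫ y in W, φ y) + ∫ z in Ioi (x - p0), g z := by
        rw [integral_add hwin_int htail_int, integral_const_mul,
          integral_indicator measurableSet_Ioc, integral_indicator_Iio_comp_sub]
    _ < 0 := by
        have := mul_le_mul_of_nonneg_left hwin hc.le
        linarith

end Kernel

noncomputable def posSeries (f : ℝ → ℝ) (a x : ℝ) : ℝ :=
  ∑' n : ℕ, max (f (x + n * a)) 0

section posSeries

variable {f : ℝ → ℝ} {p0 a : ℝ}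

theorem hasSum_posSeries (hf : ∀ y, p0 ≤ y → f y ≤ 0) (ha : 0 < a) (x : ℝ) :
    HasSum (fun n : ℕ => max (f (x + n * a)) 0)
      (∑ n ∈ Finset.range ⌈(p0 - x) / a⌉₊, max (f (x + n * a)) 0) := by
  refine hasSum_sum_of_ne_finset_zero fun n hn => max_eq_right (hf _ ?_)
  rw [Finset.mem_range, not_lt, Nat.ceil_le, div_le_iff₀ ha] at hn
  linarith

theorem posSeries_nonneg (x : ℝ) : 0 ≤ posSeries f a x :=
  tsum_nonneg fun _ => le_max_right _ _

theorem le_posSeries (hf : ∀ y, p0 ≤ y → f y ≤ 0) (ha : 0 < a) (x : ℝ) (n : ℕ) :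
    max (f (x + n * a)) 0 ≤ posSeries f a x :=
  (hasSum_posSeries hf ha x).summable.le_tsum n fun _ _ => le_max_right _ _

theorem posSeries_eq_zero (hf : ∀ y, p0 ≤ y → f y ≤ 0) (ha : 0 ≤ a) {x : ℝ}
    (hx : p0 ≤ x) : posSeries f a x = 0 := by
  have h : ∀ n : ℕ, max (f (x + n * a)) 0 = 0 := fun n =>
    max_eq_right (hf _ (by nlinarith [n.cast_nonneg (α := ℝ)]))
  simp [posSeries, h]

theorem posSeries_le (hf : ∀ y, p0 ≤ y → f y ≤ 0) (ha : 0 < a) {B : ℝ}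
    (hB : ∀ y, |f y| ≤ B) (x : ℝ) : posSeries f a x ≤ B * (1 + |x - p0| / a) := by
  have hB0 : 0 ≤ B := (abs_nonneg _).trans (hB 0)
  have hceil : (⌈(p0 - x) / a⌉₊ : ℝ) ≤ 1 + |x - p0| / a := by
    have h_mono : (⌈(p0 - x) / a⌉₊ : ℝ) ≤ ⌈|(p0 - x) / a|⌉₊ := by
      exact_mod_cast Nat.ceil_mono (le_abs_self _)
    have h_lt := Nat.ceil_lt_add_one (abs_nonneg ((p0 - x) / a))
    rw [abs_div, abs_sub_comm, abs_of_pos ha] at h_mono h_lt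
    linarith
  rw [posSeries, (hasSum_posSeries hf ha x).tsum_eq]
  calc _ ≤ (Finset.range ⌈(p0 - x) / a⌉₊).card • B :=
        Finset.sum_le_card_nsmul _ _ _ fun n _ => max_le ((le_abs_self _).trans (hB _)) hB0
    _ ≤ B * (1 + |x - p0| / a) := by
        rw [Finset.card_range, nsmul_eq_mul, mul_comm]
        exact mul_le_mul_of_nonneg_left hceil hB0

theorem aestronglyMeasurable_posSeries (hf : ∀ y, p0 ≤ y → f y ≤ 0) (ha : 0 < a)
    (hfm : AEStronglyMeasurable f) : AEStronglyMeasurable (posSeries f a) := by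
  refine aestronglyMeasurable_of_tendsto_ae atTop
    (f := fun N x => ∑ n ∈ Finset.range N, max (f (x + n * a)) 0) (fun N => ?_)
    (ae_of_all _ fun x => (hasSum_posSeries hf ha x).summable.hasSum.tendsto_sum_nat)
  refine Finset.aestronglyMeasurable_fun_sum _ fun n _ => ?_
  exact ((hfm.comp_measurePreserving (measurePreserving_add_right volume _)).sup
    aestronglyMeasurable_const)

end posSeries

def reflect (f : ℝ → ℝ) : ℝ → ℝ := fun x => -f (-x)

@[simp] theorem reflect_apply (f : ℝ → ℝ) (x : ℝ) : reflect f x = -f (-x) := rfl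

@[simp] theorem reflect_reflect (f : ℝ → ℝ) : reflect (reflect f) = f := by
  ext x; simp

theorem integral_mul_reflect_sub {K : ℝ → ℝ} (hK : ∀ z, K (-z) = K z) (φ : ℝ → ℝ) (x : ℝ) :
    ∫ z, K z * reflect φ (x - z) = -∫ z, K z * φ (-x - z) := by
  rw [← integral_neg, ← integral_neg_eq_self]
  simp only [reflect_apply, hK, sub_neg_eq_add, mul_neg]
  congr 1 with z
  ring_nf

/-- Condition (A1) on `f` with price `p0`. -/
structure ChangesSignAt (f : ℝ → ℝ) (p0 : ℝ) : Prop where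
  eq_zero : f p0 = 0
  pos_of_lt : ∀ x, x < p0 → 0 < f x
  neg_of_gt : ∀ x, p0 < x → f x < 0

namespace ChangesSignAt

variable {f : ℝ → ℝ} {p0 : ℝ}

theorem nonpos_of_ge (h : ChangesSignAt f p0) {x : ℝ} (hx : p0 ≤ x) : f x ≤ 0 :=
  hx.eq_or_lt.elim (fun hx => hx ▸ h.eq_zero.le) fun hx => (h.neg_of_gt x hx).le

theorem reflect (h : ChangesSignAt f p0) : ChangesSignAt (reflect f) (-p0) where
  eq_zero := by simp [h.eq_zero]
  pos_of_lt x hx := by simpa using h.neg_of_gt (-x) (by linarith)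
  neg_of_gt x hx := by simpa using h.pos_of_lt (-x) (by linarith)

end ChangesSignAt

/-- The transformed datum `F_I` of the paper; its second term is `∑ₙ f⁻(x − n a)`. -/
noncomputable def transformedDatum (f : ℝ → ℝ) (a : ℝ) (x : ℝ) : ℝ :=
  posSeries f a x - posSeries (reflect f) a (-x)

theorem posSeries_reflect_neg (f : ℝ → ℝ) (a x : ℝ) :
    posSeries (reflect f) a (-x) = ∑' n : ℕ, max (-f (x - n * a)) 0 := by
  simp [posSeries, sub_eq_neg_add]

theorem transformedDatum_reflect (f : ℝ → ℝ) (a : ℝ) :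
    transformedDatum (reflect f) a = reflect (transformedDatum f a) := by
  ext x
  simp [transformedDatum]

section transformedDatum

variable {f : ℝ → ℝ} {p0 a : ℝ}

theorem transformedDatum_of_lt (h : ChangesSignAt f p0) (ha : 0 < a) {x : ℝ} (hx : x < p0) :
    transformedDatum f a x = posSeries f a x := by
  rw [transformedDatum, posSeries_eq_zero (fun _ => h.reflect.nonpos_of_ge) ha.le
    (neg_le_neg hx.le), sub_zero]

theorem transformedDatum_of_ge (h : ChangesSignAt f p0) (ha : 0 < a) {x : ℝ} (hx : p0 ≤ x) :
    transformedDatum f a x = -posSeries (reflect f) a (-x) := by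
  rw [transformedDatum, posSeries_eq_zero (fun _ => h.nonpos_of_ge) ha.le hx, zero_sub]

theorem eq_transformedDatum_of_ne {F_I : ℝ → ℝ} (h : ChangesSignAt f p0) (ha : 0 < a)
    (hFI_lt : ∀ x : ℝ, x < p0 → F_I x = ∑' n : ℕ, max (f (x + n * a)) 0)
    (hFI_gt : ∀ x : ℝ, p0 < x → F_I x = -∑' n : ℕ, max (-f (x - n * a)) 0)
    {x : ℝ} (hx : x ≠ p0) : F_I x = transformedDatum f a x := by
  rcases hx.lt_or_gt with hx | hx
  · rw [hFI_lt x hx, transformedDatum_of_lt h ha hx, posSeries]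
  · rw [hFI_gt x hx, transformedDatum_of_ge h ha hx.le, posSeries_reflect_neg]

theorem abs_transformedDatum_le (h : ChangesSignAt f p0) (ha : 0 < a) {B : ℝ}
    (hB : ∀ y, |f y| ≤ B) (x : ℝ) : |transformedDatum f a x| ≤ B * (1 + |x - p0| / a) := by
  rcases lt_or_ge x p0 with hx | hx
  · rw [transformedDatum_of_lt h ha hx, abs_of_nonneg (posSeries_nonneg x)]
    exact posSeries_le (fun _ => h.nonpos_of_ge) ha hB x
  · rw [transformedDatum_of_ge h ha hx, abs_neg, abs_of_nonneg (posSeries_nonneg _)]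
    have hB' : ∀ y, |reflect f y| ≤ B := fun y => by simpa using hB (-y)
    have hx' : |-x - -p0| = |x - p0| := by rw [← abs_neg]; ring_nf
    simpa only [hx'] using posSeries_le (fun _ => h.reflect.nonpos_of_ge) ha hB' (-x)

theorem transformedDatum_le_neg_part (h : ChangesSignAt f p0) (ha : 0 < a) {x : ℝ}
    (hx : p0 ≤ x) (n : ℕ) : transformedDatum f a x ≤ -max (-f (x - n * a)) 0 := by
  rw [transformedDatum_of_ge h ha hx, neg_le_neg_iff]
  simpa [sub_eq_neg_add] using le_posSeries (fun _ => h.reflect.nonpos_of_ge) ha (-x) n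

theorem transformedDatum_nonpos (h : ChangesSignAt f p0) (ha : 0 < a) {x : ℝ} (hx : p0 ≤ x) :
    transformedDatum f a x ≤ 0 :=
  (transformedDatum_le_neg_part h ha hx 0).trans (neg_nonpos.2 (le_max_right _ _))

theorem aestronglyMeasurable_transformedDatum (h : ChangesSignAt f p0) (ha : 0 < a)
    (hfm : AEStronglyMeasurable f) : AEStronglyMeasurable (transformedDatum f a) :=
  have hneg := Measure.measurePreserving_neg (volume : Measure ℝ)
  (aestronglyMeasurable_posSeries (fun _ => h.nonpos_of_ge) ha hfm).sub
    ((aestronglyMeasurable_posSeries (fun _ => h.reflect.nonpos_of_ge) ha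
      (hfm.comp_measurePreserving hneg).neg).comp_measurePreserving hneg)

theorem intervalIntegral_transformedDatum_le (h : ChangesSignAt f p0) (ha : 0 < a)
    (hint : Integrable f) {B : ℝ} (hB : ∀ y, |f y| ≤ B) (n : ℕ) :
    ∫ y in p0 + n * a..p0 + n * a + a, transformedDatum f a y ≤
      -∫ y in p0..p0 + a, max (-f y) 0 := by
  have hΦ : IntervalIntegrable (transformedDatum f a) volume (p0 + n * a) (p0 + n * a + a) :=
    (continuous_const.mul (continuous_const.add
      ((continuous_id.sub continuous_const).abs.div_const a))).intervalIntegrable _ _ |>.mono_fun'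
      (aestronglyMeasurable_transformedDatum h ha hint.aestronglyMeasurable).restrict
      (ae_of_all _ (abs_transformedDatum_le h ha hB))
  calc _ ≤ ∫ y in p0 + n * a..p0 + n * a + a, -max (-f (y - n * a)) 0 :=
        intervalIntegral.integral_mono_on (by linarith) hΦ
          (hint.neg_part.comp_sub_right _).neg.intervalIntegrable fun y hy =>
            transformedDatum_le_neg_part h ha (by nlinarith [hy.1, n.cast_nonneg (α := ℝ)]) n
    _ = _ := by
        rw [intervalIntegral.integral_neg,
          intervalIntegral.integral_comp_sub_right (fun y => max (-f y) 0)]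
        congr 3 <;> ring

theorem intervalIntegral_neg_part_pos (h : ChangesSignAt f p0) (ha : 0 < a)
    (hint : Integrable f) : 0 < ∫ y in p0..p0 + a, max (-f y) 0 :=
  intervalIntegral.intervalIntegral_pos_of_pos_on hint.neg_part.intervalIntegrable
    (fun y hy => lt_max_of_lt_left (neg_pos.2 (h.neg_of_gt y hy.1))) (by linarith)

end transformedDatum

section HeatExtension

variable {f : ℝ → ℝ} {p0 a B t : ℝ}

theorem eventually_heatExtension_transformedDatum_neg (h : ChangesSignAt f p0)
    (hint : Integrable f) (hB : ∀ y, |f y| ≤ B) (ha : 0 < a) (ht : 0 < t) :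
    ∀ᶠ x in atTop, ∫ z, heatKernel t z * transformedDatum f a (x - z) < 0 :=
  eventually_integral_mul_sub_neg ha (heatKernel_pos ht a)
    (intervalIntegral_neg_part_pos h ha hint) (fun z => (heatKernel_pos ht z).le)
    (integrable_heatKernel ht) (integrable_abs_mul_heatKernel ht)
    (fun _ hz => heatKernel_le_heatKernel_of_abs_le ht.le ((abs_le.2 hz).trans (le_abs_self a)))
    (aestronglyMeasurable_transformedDatum h ha hint.aestronglyMeasurable)
    (abs_transformedDatum_le h ha hB) (fun _ => transformedDatum_nonpos h ha)
    (intervalIntegral_transformedDatum_le h ha hint hB)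

theorem eventually_heatExtension_transformedDatum_pos (h : ChangesSignAt f p0)
    (hint : Integrable f) (hB : ∀ y, |f y| ≤ B) (ha : 0 < a) (ht : 0 < t) :
    ∀ᶠ x in atBot, 0 < ∫ z, heatKernel t z * transformedDatum f a (x - z) := by
  have hB' : ∀ y, |reflect f y| ≤ B := fun y => by simpa using hB (-y)
  filter_upwards [tendsto_neg_atBot_atTop.eventually
    (eventually_heatExtension_transformedDatum_neg h.reflect hint.comp_neg.neg hB' ha ht)]
    with x hx
  rw [← reflect_reflect f, transformedDatum_reflect,
    integral_mul_reflect_sub (heatKernel_neg t)]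
  linarith

end HeatExtension

/-- Let `f_I ∈ L¹ ∩ L^∞` satisfy (A1) with price `p0` and transaction cost `a > 0`, let
`F_I` be the transformed datum (series of translates of `f_I⁺` to the left of `p0`, minus
the series of translates of `f_I⁻` to the right of `p0`), and let `F` be its heat
extension. Then for every `t > 0` there is `R > 0` with `F(x,t) < 0` for `x > R` and
`F(x,t) > 0` for `x < −R`. -/
theorem heat_extension_sign_at_infinity
    (f_I : ℝ → ℝ) (hint : Integrable f_I) (B : ℝ) (hB : ∀ x : ℝ, |f_I x| ≤ B)
    (p0 a : ℝ) (ha : 0 < a)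
    (hA1_zero : f_I p0 = 0)
    (hA1_pos : ∀ x : ℝ, x < p0 → 0 < f_I x)
    (hA1_neg : ∀ x : ℝ, p0 < x → f_I x < 0)
    (F_I : ℝ → ℝ)
    (hFI_lt : ∀ x : ℝ, x < p0 → F_I x = ∑' n : ℕ, max (f_I (x + n * a)) 0)
    (hFI_gt : ∀ x : ℝ, p0 < x → F_I x = -∑' n : ℕ, max (-f_I (x - n * a)) 0)
    (F : ℝ → ℝ → ℝ)
    (hF : ∀ x t : ℝ, F x t = ∫ z : ℝ, heatKernel t z * F_I (x - z)) :
    ∀ t : ℝ, 0 < t → ∃ R : ℝ, 0 < R ∧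
      (∀ x : ℝ, R < x → F x t < 0) ∧ (∀ x : ℝ, x < -R → 0 < F x t) := by
  intro t ht
  have hA1 : ChangesSignAt f_I p0 := ⟨hA1_zero, hA1_pos, hA1_neg⟩
  have hF' : ∀ x, F x t = ∫ z, heatKernel t z * transformedDatum f_I a (x - z) := fun x => by
    rw [hF]
    refine integral_congr_ae ?_
    filter_upwards [Measure.ae_ne volume (x - p0)] with z hz
    rw [eq_transformedDatum_of_ne hA1 ha hFI_lt hFI_gt fun h => hz (by linarith)]
  obtain ⟨R₁, hR₁⟩ := eventually_atTop.1
    (eventually_heatExtension_transformedDatum_neg hA1 hint hB ha ht)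
  obtain ⟨R₂, hR₂⟩ := eventually_atBot.1
    (eventually_heatExtension_transformedDatum_pos hA1 hint hB ha ht)
  refine ⟨max 1 (max R₁ (-R₂)), by positivity, fun x hx => ?_, fun x hx => ?_⟩
  · rw [hF']
    exact hR₁ x (by linarith [le_max_left R₁ (-R₂), le_max_right 1 (max R₁ (-R₂))])
  · rw [hF']
    exact hR₂ x (by linarith [le_max_right R₁ (-R₂), le_max_right 1 (max R₁ (-R₂))])
end

section
/- Let f_I ∈ L¹(ℝ) ∩ L^∞(ℝ) satisfy (A1) with price p0 ∈ ℝ and transaction cost a > 0, and for x ≥ 0 set F_I as the transformed datum. Then ∫_{p0}^{p0+a} |F_I(x + z)| dz = Σ_{n=0}^∞ ∫_{x+p0−na}^{x+p0−(n−1)a} f_I^-(y) dy = ∫_{−∞}^{x+p0+a} f_I^-(y) dy ≥ ∫_{p0}^{p0+a} f_I^-(y) dy > 0 for every x ≥ 0. -/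
open MeasureTheory

/-- Let `f_I ∈ L¹ ∩ L^∞` satisfy (A1) with price `p0` and transaction cost `a > 0`, and let
`F_I` be the transformed datum. Then for every `x ≥ 0`,
`∫_{p0}^{p0+a} |F_I(x+z)| dz = ∑ₙ ∫_{x+p0−na}^{x+p0−(n−1)a} f_I⁻ = ∫_{−∞}^{x+p0+a} f_I⁻
  ≥ ∫_{p0}^{p0+a} f_I⁻ > 0`. -/
theorem transformed_datum_window_lower_bound
    (f_I : ℝ → ℝ) (hint : Integrable f_I) (B : ℝ) (hB : ∀ x : ℝ, |f_I x| ≤ B)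
    (p0 a : ℝ) (ha : 0 < a)
    (hA1_zero : f_I p0 = 0)
    (hA1_pos : ∀ x : ℝ, x < p0 → 0 < f_I x)
    (hA1_neg : ∀ x : ℝ, p0 < x → f_I x < 0)
    (F_I : ℝ → ℝ)
    (hFI_lt : ∀ x : ℝ, x < p0 → F_I x = ∑' n : ℕ, max (f_I (x + n * a)) 0)
    (hFI_gt : ∀ x : ℝ, p0 < x → F_I x = -∑' n : ℕ, max (-f_I (x - n * a)) 0) :
    ∀ x : ℝ, 0 ≤ x →
      ((∫ z in p0..(p0 + a), |F_I (x + z)|)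
          = ∑' n : ℕ, ∫ y in (x + p0 - n * a)..(x + p0 - ((n : ℝ) - 1) * a), max (-f_I y) 0) ∧
      ((∑' n : ℕ, ∫ y in (x + p0 - n * a)..(x + p0 - ((n : ℝ) - 1) * a), max (-f_I y) 0)
          = ∫ y in Set.Iic (x + p0 + a), max (-f_I y) 0) ∧
      ((∫ y in p0..(p0 + a), max (-f_I y) 0)
          ≤ ∫ y in Set.Iic (x + p0 + a), max (-f_I y) 0) ∧
      (0 < ∫ y in p0..(p0 + a), max (-f_I y) 0) := by
  intro x hx
  set g : ℝ → ℝ := fun y => max (-f_I y) 0 with hg_def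
  have hg_nonneg : ∀ y, 0 ≤ g y := fun y => le_max_right _ _
  have hg_int : Integrable g := hint.neg.pos_part
  set c : ℝ := x + p0 with hc_def
  set s : ℕ → Set ℝ := fun n => Set.Ioc (c - n * a) (c + a - n * a) with hs_def
  have hs_meas : ∀ n, MeasurableSet (s n) := fun n => measurableSet_Ioc
  have hend : ∀ n : ℕ, c - ((n : ℝ) - 1) * a = c + a - n * a := by intro n; ring
  have hdisj : Pairwise (Function.onFun Disjoint s) := by
    intro m n hmn
    rcases hmn.lt_or_gt with h | h
    · apply Set.Ioc_disjoint_Ioc.mpr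
      have : (m : ℝ) + 1 ≤ n := by exact_mod_cast h
      calc min (c + a - m * a) (c + a - n * a) ≤ c + a - n * a := min_le_right _ _
        _ ≤ c - m * a := by nlinarith
        _ ≤ max (c - m * a) (c - n * a) := le_max_left _ _
    · apply Set.Ioc_disjoint_Ioc.mpr
      have : (n : ℝ) + 1 ≤ m := by exact_mod_cast h
      calc min (c + a - m * a) (c + a - n * a) ≤ c + a - m * a := min_le_left _ _
        _ ≤ c - n * a := by nlinarith
        _ ≤ max (c - m * a) (c - n * a) := le_max_right _ _
  have hunion : (⋃ n, s n) = Set.Iic (c + a) := by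
    apply Set.Subset.antisymm
    · intro y hy
      rcases Set.mem_iUnion.mp hy with ⟨n, hn⟩
      have : y ≤ c + a - n * a := hn.2
      have hna : (0:ℝ) ≤ n * a := by positivity
      exact Set.mem_Iic.mpr (by linarith)
    · intro y hy
      have hy' : y ≤ c + a := hy
      have hex : ∃ n : ℕ, c - n * a < y := by
        obtain ⟨n, hn⟩ := exists_nat_gt ((c - y) / a)
        refine ⟨n, ?_⟩
        have : c - y < n * a := by
          have := (div_lt_iff₀ ha).mp hn
          linarith
        linarith
      classical
      obtain ⟨n, hn, hmin⟩ := Nat.lt_wfRel.wf.has_min {n | c - n * a < y} hex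
      refine Set.mem_iUnion.mpr ⟨n, ?_⟩
      have hmem : y ∈ Set.Ioc (c - n * a) (c + a - n * a) := by
        cases n with
        | zero =>
          have h0 : c - ((0:ℕ):ℝ) * a < y := hn
          refine Set.mem_Ioc.mpr ⟨h0, ?_⟩
          push_cast
          linarith
        | succ k =>
          have hk : ¬ (c - k * a < y) := fun h => hmin k h (Nat.lt_succ_self k)
          push_neg at hk
          refine Set.mem_Ioc.mpr ⟨hn, ?_⟩
          push_cast
          linarith
      exact hmem
  have hle : ∀ n : ℕ, c - n * a ≤ c - ((n : ℝ) - 1) * a := by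
    intro n
    rw [hend n]
    have : (0:ℝ) ≤ n * a := by positivity
    linarith
  -- interval integral = set integral over s n
  have hIoc : ∀ n : ℕ, (∫ y in (c - n * a)..(c - ((n : ℝ) - 1) * a), g y) = ∫ y in s n, g y := by
    intro n
    rw [intervalIntegral.integral_of_le (hle n), hend n]
  have hHasSum : HasSum (fun n => ∫ y in s n, g y) (∫ y in Set.Iic (c + a), g y) := by
    have := hasSum_integral_iUnion hs_meas hdisj (hg_int.integrableOn)
    rwa [hunion] at this
  -- translated integrals over the window
  have htrans : ∀ n : ℕ, (∫ z in Set.Ioc p0 (p0 + a), g (z + (x - n * a))) = ∫ y in s n, g y := by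
    intro n
    rw [← intervalIntegral.integral_of_le (by linarith : p0 ≤ p0 + a),
      intervalIntegral.integral_comp_add_right g (x - n * a),
      intervalIntegral.integral_of_le (by linarith : p0 + (x - n * a) ≤ p0 + a + (x - n * a))]
    have e1 : p0 + (x - n * a) = c - n * a := by rw [hc_def]; ring
    have e2 : p0 + a + (x - n * a) = c + a - n * a := by rw [hc_def]; ring
    rw [e1, e2]
  -- Part 2
  have part2 : (∑' n : ℕ, ∫ y in (c - n * a)..(c - ((n : ℝ) - 1) * a), g y)
      = ∫ y in Set.Iic (c + a), g y := by
    rw [tsum_congr hIoc]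
    exact hHasSum.tsum_eq
  -- Part 1
  have part1 : (∫ z in p0..(p0 + a), |F_I (x + z)|)
      = ∑' n : ℕ, ∫ y in (c - n * a)..(c - ((n : ℝ) - 1) * a), g y := by
    rw [intervalIntegral.integral_of_le (by linarith : p0 ≤ p0 + a)]
    have hcong : ∀ z ∈ Set.Ioc p0 (p0 + a), |F_I (x + z)| = ∑' n : ℕ, g (z + (x - n * a)) := by
      intro z hz
      have hz' : p0 < x + z := by have := hz.1; linarith
      rw [hFI_gt _ hz', abs_neg,
        abs_of_nonneg (tsum_nonneg fun n => le_max_right _ _)]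
      exact tsum_congr fun n => by rw [show x + z - n * a = z + (x - n * a) by ring]
    rw [setIntegral_congr_fun measurableSet_Ioc hcong]
    have hFint : ∀ n : ℕ, Integrable (fun z => g (z + (x - n * a)))
        (volume.restrict (Set.Ioc p0 (p0 + a))) :=
      fun n => (hg_int.comp_add_right (x - n * a)).integrableOn
    have hnorm : ∀ n : ℕ, (∫ z in Set.Ioc p0 (p0 + a), ‖g (z + (x - n * a))‖) = ∫ y in s n, g y := by
      intro n
      rw [← htrans n]
      congr 1
      ext z
      exact Real.norm_of_nonneg (hg_nonneg _)
    have hsum : Summable fun n : ℕ => ∫ z in Set.Ioc p0 (p0 + a), ‖g (z + (x - n * a))‖ := by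
      rw [funext hnorm]
      exact hHasSum.summable
    rw [← integral_tsum_of_summable_integral_norm hFint hsum]
    exact tsum_congr fun n => by rw [htrans n, hIoc n]
  refine ⟨part1, part2, ?_, ?_⟩
  · rw [intervalIntegral.integral_of_le (by linarith : p0 ≤ p0 + a)]
    apply setIntegral_mono_set hg_int.integrableOn (ae_of_all _ hg_nonneg)
    apply HasSubset.Subset.eventuallyLE
    intro y hy
    have : y ≤ p0 + a := hy.2
    exact Set.mem_Iic.mpr (by rw [hc_def]; linarith)
  · apply intervalIntegral.intervalIntegral_pos_of_pos_on hg_int.intervalIntegrable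
    · intro y hy
      have h1 : f_I y < 0 := hA1_neg y hy.1
      exact lt_max_iff.mpr (Or.inl (by linarith))
    · linarith
end
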